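/- Let a₁,…,aₘ ∈ ℚⁿ have square-free common denominator q = p₁⋯pₛ with distinct primes pⱼ, let A be the matrix with rows q·aᵢ, and let rank_j denote the rank of A over 𝔽_{pⱼ}. Then the covolume of the lattice Λ = ⟨ℤⁿ, a₁,…,aₘ⟩_ℤ equals p₁^{−rank₁} · p₂^{−rank₂} ⋯ pₛ^{−rankₛ}. -/

import Mathlib

/-!
Sending `c ∈ ℤᵐ` to `∑ cᵢ aᵢ` gives a surjection `ℤᵐ → Λ/ℤⁿ`; since `aᵢ = Aᵢ / q`, its kernel
consists of the `c` with `c A ≡ 0 (mod q)`, so `Λ/ℤⁿ` is isomorphic to the row space of `A` over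
`ℤ/q`. As `q` is square-free, `ℤ/q ≅ ∏ⱼ 𝔽_{pⱼ}` by the Chinese remainder theorem, and the row space
over `ℤ/q` splits accordingly into the row spaces over the `𝔽_{pⱼ}`, of sizes `pⱼ ^ rankⱼ`.
-/

def intLattice (n : ℕ) : Submodule ℤ (Fin n → ℚ) :=
  Submodule.span ℤ (Set.range fun i => (Pi.single i 1 : Fin n → ℚ))

open Matrix Submodule

theorem Submodule.card_quotient_sup_span_range {R M ι : Type*} [Ring R] [AddCommGroup M]
    [Module R M] [Fintype ι] (L : Submodule R M) (a : ι → M) :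
    Nat.card ((L ⊔ span R (Set.range a) : Submodule R M) ⧸
        L.comap (L ⊔ span R (Set.range a)).subtype) =
      Nat.card ((ι → R) ⧸ L.comap (Fintype.linearCombination R a)) := by
  set Λ := L ⊔ span R (Set.range a)
  set f := Fintype.linearCombination R a
  have hf : ∀ c, f c ∈ Λ := fun c =>
    le_sup_right (a := L) (Fintype.range_linearCombination R a ▸ LinearMap.mem_range_self f c)
  let ψ := (L.comap Λ.subtype).mkQ ∘ₗ f.codRestrict Λ hf
  have hker : LinearMap.ker ψ = L.comap f := by
    rw [LinearMap.ker_comp, ker_mkQ, ← comap_comp, LinearMap.subtype_comp_codRestrict]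
  have hsurj : Function.Surjective ψ := by
    rintro ⟨v, hv⟩
    obtain ⟨l, hl, s, hs, rfl⟩ := mem_sup.mp hv
    obtain ⟨c, rfl⟩ := (Fintype.range_linearCombination R a ▸ hs : s ∈ LinearMap.range f)
    refine ⟨c, (Quotient.eq _).mpr ?_⟩
    show f c - (l + f c) ∈ L
    rw [sub_add_eq_sub_sub, sub_sub_cancel_left]
    exact neg_mem hl
  rw [← hker]
  exact Nat.card_congr (ψ.quotKerEquivOfSurjective hsurj).toEquiv.symm

noncomputable def ZMod.equivPiOfSquarefree {q : ℕ} (hq : Squarefree q) :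
    ZMod q ≃+* Π p : q.primeFactors, ZMod p :=
  (ZMod.ringEquivCongr ((q.primeFactors.prod_coe_sort id).trans
      (Nat.prod_primeFactors_of_squarefree hq)).symm).trans
    (ZMod.prodEquivPi _ fun p p' hne => (Nat.coprime_primes (Nat.prime_of_mem_primeFactors p.2)
      (Nat.prime_of_mem_primeFactors p'.2)).mpr (Subtype.coe_ne_coe.mpr hne))

section

variable {m n : Type*} [Fintype m]

theorem card_range_vecMulLinear {K : Type*} [Field K] [Fintype n] (B : Matrix m n K) :
    Nat.card (LinearMap.range B.vecMulLinear) = Nat.card K ^ B.rank := by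
  rw [range_vecMulLinear, B.rank_eq_finrank_span_row, Module.natCard_eq_pow_finrank (K := K)]

theorem card_range_vecMulLinear_of_ringEquiv_pi {R ι : Type*} [CommRing R] [Fintype ι]
    {S : ι → Type*} [∀ i, CommRing (S i)] (e : R ≃+* Π i, S i) (B : Matrix m n R) :
    Nat.card (LinearMap.range B.vecMulLinear) =
      ∏ i, Nat.card (LinearMap.range (B.map fun r => e r i).vecMulLinear) := by
  let Φm : (m → R) ≃ Π i, m → S i :=
    (Equiv.piCongrRight fun _ => e.toEquiv).trans (Equiv.piComm _)
  let Φn : (n → R) ≃ Π i, n → S i :=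
    (Equiv.piCongrRight fun _ => e.toEquiv).trans (Equiv.piComm _)
  have hΦ (x : m → R) : Φn (x ᵥ* B) = Pi.map (fun i y => y ᵥ* B.map (e · i)) (Φm x) := by
    funext i j
    exact RingHom.map_vecMul ((Pi.evalRingHom S i).comp e.toRingHom) B x j
  have himage : Φn '' Set.range (· ᵥ* B) =
      Set.univ.pi fun i => Set.range (· ᵥ* B.map (e · i)) := by
    rw [← Set.range_comp, ← Set.range_piMap, Function.comp_def]
    simp only [hΦ]
    exact Φm.surjective.range_comp (Pi.map _)
  calc Nat.card (LinearMap.range B.vecMulLinear)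
      = Nat.card (Φn '' Set.range (· ᵥ* B)) :=
        (Nat.card_image_of_injective Φn.injective _).symm
    _ = _ := by
        rw [himage, Nat.card_congr (Equiv.Set.univPi _), Nat.card_pi]
        rfl

theorem card_range_vecMulLinear_intCast_of_squarefree [Fintype n] {q : ℕ} (hq : Squarefree q)
    (A : Matrix m n ℤ) :
    Nat.card (LinearMap.range (A.map (Int.cast : ℤ → ZMod q)).vecMulLinear) =
      ∏ p ∈ q.primeFactors, p ^ (A.map (Int.cast : ℤ → ZMod p)).rank := by
  rw [card_range_vecMulLinear_of_ringEquiv_pi (ZMod.equivPiOfSquarefree hq),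
    ← Finset.prod_coe_sort q.primeFactors]
  refine Finset.prod_congr rfl fun p _ => ?_
  have : Fact (p : ℕ).Prime := ⟨Nat.prime_of_mem_primeFactors p.2⟩
  let e := ZMod.equivPiOfSquarefree hq
  have hcast : (fun r => e r p) ∘ (Int.cast : ℤ → ZMod q) = Int.cast :=
    funext (map_intCast ((Pi.evalRingHom _ p).comp e.toRingHom))
  rw [Matrix.map_map, hcast, card_range_vecMulLinear, Nat.card_zmod]

def vecMulZModLinear (q : ℕ) (A : Matrix m n ℤ) :
    (m → ℤ) →ₗ[ℤ] (n → ZMod q) :=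
  LinearMap.compLeft (Int.castAddHom (ZMod q)).toIntLinearMap n ∘ₗ A.vecMulLinear

theorem card_range_vecMulZModLinear (q : ℕ) (A : Matrix m n ℤ) :
    Nat.card (LinearMap.range (vecMulZModLinear q A)) =
      Nat.card (LinearMap.range (A.map (Int.cast : ℤ → ZMod q)).vecMulLinear) := by
  have hreduce : vecMulZModLinear q A =
      (A.map Int.cast).vecMulLinear.restrictScalars ℤ ∘ₗ
        LinearMap.compLeft (Int.castAddHom (ZMod q)).toIntLinearMap m :=
    LinearMap.ext fun x => funext fun j => RingHom.map_vecMul (Int.castRingHom _) A x j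
  have hsurj :
      LinearMap.range (LinearMap.compLeft (Int.castAddHom (ZMod q)).toIntLinearMap m) = ⊤ :=
    LinearMap.range_eq_top.mpr ZMod.intCast_surjective.comp_left
  rw [hreduce, LinearMap.range_comp_of_range_eq_top _ hsurj, LinearMap.range_restrictScalars]
  rfl

end

theorem mem_intLattice_iff {n : ℕ} {v : Fin n → ℚ} :
    v ∈ intLattice n ↔ ∀ j, ∃ k : ℤ, v j = k := by
  have hf : ∀ x : Fin n → ℤ,
      Fintype.linearCombination ℤ (fun i => (Pi.single i 1 : Fin n → ℚ)) x =
        fun j => (x j : ℚ) := by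
    intro x
    funext j
    simp [Fintype.linearCombination_apply, Finset.sum_apply, Pi.single_apply]
  rw [intLattice, ← Fintype.range_linearCombination, LinearMap.mem_range]
  simp only [hf, funext_iff]
  refine ⟨fun ⟨x, hx⟩ j => ⟨x j, (hx j).symm⟩, fun h => ?_⟩
  choose k hk using h
  exact ⟨k, fun j => (hk j).symm⟩

theorem div_mem_intLattice_iff {n q : ℕ} (hq : q ≠ 0) (w : Fin n → ℤ) :
    (fun j => (w j : ℚ) / q) ∈ intLattice n ↔ ∀ j, (q : ℤ) ∣ w j := by
  rw [mem_intLattice_iff]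
  refine forall_congr' fun j => exists_congr fun k => ?_
  rw [div_eq_iff (Nat.cast_ne_zero.mpr hq), mul_comm]
  norm_cast

theorem comap_linearCombination_intLattice {m n q : ℕ} (hq : q ≠ 0)
    (A : Matrix (Fin m) (Fin n) ℤ) :
    (intLattice n).comap (Fintype.linearCombination ℤ fun i j => (A i j : ℚ) / q) =
      LinearMap.ker (vecMulZModLinear q A) := by
  ext x
  have hx : Fintype.linearCombination ℤ (fun i j => (A i j : ℚ) / q) x =
      fun j => ((x ᵥ* A) j : ℚ) / q := by
    funext j
    simp [Fintype.linearCombination_apply, vecMul, dotProduct, Finset.sum_div, mul_div_assoc]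
  rw [mem_comap, hx, div_mem_intLattice_iff hq, LinearMap.mem_ker, funext_iff]
  simp [vecMulZModLinear, ZMod.intCast_zmod_eq_zero_iff_dvd]

theorem stmt6_general (n m : ℕ) (a : Fin m → (Fin n → ℚ)) (q : ℕ)
    (hqsf : Squarefree q)
    (A : Matrix (Fin m) (Fin n) ℤ)
    (hA : ∀ i j, (q : ℚ) * a i j = (A i j : ℚ)) :
    Nat.card
      ((intLattice n ⊔ Submodule.span ℤ (Set.range a) : Submodule ℤ (Fin n → ℚ)) ⧸
        Submodule.comap (intLattice n ⊔ Submodule.span ℤ (Set.range a)).subtype (intLattice n)) =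
      ∏ p ∈ q.primeFactors, p ^ (A.map (Int.cast : ℤ → ZMod p)).rank := by
  have hq : q ≠ 0 := hqsf.ne_zero
  obtain rfl : a = fun i j => (A i j : ℚ) / q := funext₂ fun i j => by
    rw [← hA, mul_div_cancel_left₀ _ (Nat.cast_ne_zero.mpr hq)]
  rw [card_quotient_sup_span_range, comap_linearCombination_intLattice hq,
    Nat.card_congr (LinearMap.quotKerEquivRange _).toEquiv, card_range_vecMulZModLinear,
    card_range_vecMulLinear_intCast_of_squarefree hqsf]

/-- det Λ = ∏ⱼ pⱼ^{−rankⱼ}, stated equivalently as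
[Λ : ℤⁿ] = ∏_{p ∣ q} p^{rank_p(A)} for square-free common denominator q. -/
theorem stmt6 (n m : ℕ) (a : Fin m → (Fin n → ℚ)) (q : ℕ) (hq0 : 0 < q)
    (hqsf : Squarefree q)
    (A : Matrix (Fin m) (Fin n) ℤ)
    (hA : ∀ i j, (q : ℚ) * a i j = (A i j : ℚ)) :
    Nat.card
      ((intLattice n ⊔ Submodule.span ℤ (Set.range a) : Submodule ℤ (Fin n → ℚ)) ⧸
        Submodule.comap (intLattice n ⊔ Submodule.span ℤ (Set.range a)).subtype (intLattice n)) =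
      ∏ p ∈ q.primeFactors, p ^ (A.map (Int.cast : ℤ → ZMod p)).rank :=
  stmt6_general n m a q hqsf A hA
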